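/- Every well-rounded sublattice of the Eisenstein integers ℤ[ω] of prime index ℓ is an ideal of ℤ[ω], and hence (being closed under multiplication by the six units) has exactly three pairs of minimal vectors. -/

import Mathlib

/-- The primitive cube root of unity `ω = e^{2πi/3}`. -/
noncomputable def ω : ℂ := Complex.exp (2 * Real.pi * Complex.I / 3)

/-- The Eisenstein lattice `ℤ[ω] ⊂ ℂ`. -/
noncomputable def Eisenstein : AddSubgroup ℂ := AddSubgroup.closure {1, ω}

/-- A plane lattice is well rounded if it has a ℤ-basis consisting of two
minimal vectors. -/
def IsWellRounded (M : AddSubgroup ℂ) : Prop :=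
  ∃ v w : ℂ, v ∈ M ∧ w ∈ M ∧ LinearIndependent ℝ ![v, w] ∧
    M = AddSubgroup.closure {v, w} ∧ ‖v‖ = ‖w‖ ∧
    ∀ u ∈ M, u ≠ 0 → ‖v‖ ≤ ‖u‖

/-- `v` is a minimal vector of `M`. -/
def IsMinimal (M : AddSubgroup ℂ) (v : ℂ) : Prop :=
  v ∈ M ∧ v ≠ 0 ∧ ∀ u ∈ M, u ≠ 0 → ‖v‖ ≤ ‖u‖

/-! Let `v, w` be a basis of minimal vectors and `N = |v|²`. The Eisenstein integer `conj v * w`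
has imaginary part `±ℓ√3/2`, because the index is the ratio of covolumes, and real part `t/2` with
`|t| ≤ N`, because `v ± w` are no shorter than `v`. Its norm `N²` then gives `4N² = t² + 3ℓ²`, which
for prime `ℓ` forces `N = ℓ` and `|t| = ℓ`. So `w / v = conj v * w / N` is one of `±ω, ±ω²`, whence
`M = v ℤ[ω]`, an ideal whose minimal vectors are `v` times the six units. -/

open ComplexConjugate

theorem Complex.basisOneI_det_pair (v w : ℂ) :
    Complex.basisOneI.det ![v, w] = (conj v * w).im := by
  rw [Module.Basis.det_apply, Matrix.det_fin_two]
  simp only [Module.Basis.toMatrix_apply, Complex.coe_basisOneI_repr, Complex.mul_im,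
    Complex.conj_re, Complex.conj_im, Matrix.cons_val_zero, Matrix.cons_val_one]
  ring

theorem AddSubgroup.relIndex_closure_pair_mul_abs_im {v w v' w' : ℂ}
    (h : LinearIndependent ℝ ![v, w]) (h' : LinearIndependent ℝ ![v', w'])
    (hle : AddSubgroup.closure {v, w} ≤ AddSubgroup.closure {v', w'}) :
    ((AddSubgroup.closure {v, w}).relIndex (AddSubgroup.closure {v', w'}) : ℝ) *
      |(conj v' * w').im| = |(conj v * w).im| := by
  classical
  let b := basisOfLinearIndependentOfCardEqFinrank h (by simp)
  let b' := basisOfLinearIndependentOfCardEqFinrank h' (by simp)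
  have hbv : ⇑b = ![v, w] := coe_basisOfLinearIndependentOfCardEqFinrank _ _
  have hbv' : ⇑b' = ![v', w'] := coe_basisOfLinearIndependentOfCardEqFinrank _ _
  have hb : AddSubgroup.closure {v, w} = .closure (Set.range b) := by
    rw [hbv, Matrix.range_cons_cons_empty]
  have hb' : AddSubgroup.closure {v', w'} = .closure (Set.range b') := by
    rw [hbv', Matrix.range_cons_cons_empty]
  rw [AddSubgroup.relIndex_eq_natAbs_det _ _ hle (b.addSubgroupOfClosure _ hb)
    (b'.addSubgroupOfClosure _ hb'), Nat.cast_natAbs, Int.cast_abs]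
  have hcast : (((b'.addSubgroupOfClosure _ hb').det
      (fun i ↦ ⟨b.addSubgroupOfClosure _ hb i, hle (SetLike.coe_mem _)⟩) : ℤ) : ℝ) = b'.det b := by
    change algebraMap ℤ ℝ _ = _
    rw [Module.Basis.det_apply, Module.Basis.det_apply, RingHom.map_det]
    congr; ext
    simp only [Module.Basis.toMatrix_apply, Module.Basis.addSubgroupOfClosure_apply]
    exact Module.Basis.addSubgroupOfClosure_repr_apply _ _ hb' _ _
  rw [hcast, ← abs_mul, ← Complex.basisOneI_det_pair, ← Complex.basisOneI_det_pair, mul_comm,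
    ← hbv, ← hbv', Complex.basisOneI.det_mul_det b' b]

theorem AddSubgroup.closure_pair_mul_left (c a b : ℂ) :
    AddSubgroup.closure {c * a, c * b} =
      (AddSubgroup.closure {a, b}).map (AddMonoidHom.mulLeft c) := by
  rw [AddMonoidHom.map_closure, Set.image_pair]
  rfl

theorem isMinimal_map_mulLeft_iff {L : AddSubgroup ℂ} {c : ℂ} (hc : c ≠ 0) {u : ℂ} :
    IsMinimal (L.map (AddMonoidHom.mulLeft c)) (c * u) ↔ IsMinimal L u := by
  have hmem : ∀ e, c * e ∈ L.map (AddMonoidHom.mulLeft c) ↔ e ∈ L :=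
    fun e ↦ AddSubgroup.mem_map_iff_mem (f := AddMonoidHom.mulLeft c) (mul_right_injective₀ hc)
  have hnorm : ∀ e, ‖c * u‖ ≤ ‖c * e‖ ↔ ‖u‖ ≤ ‖e‖ := fun e ↦ by
    simp only [norm_mul]
    exact mul_le_mul_iff_right₀ (norm_pos_iff.2 hc)
  refine and_congr (hmem u) (and_congr (mul_ne_zero_iff.trans (and_iff_right hc))
    ⟨fun h e he he0 ↦ ?_, fun h e he he0 ↦ ?_⟩)
  · exact (hnorm e).1 (h _ ((hmem e).2 he) (mul_ne_zero hc he0))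
  · obtain ⟨e', he', rfl⟩ := AddSubgroup.mem_map.1 he
    exact (hnorm e').2 (h e' he' (right_ne_zero_of_mul he0))

theorem card_isMinimal_map_mulLeft (L : AddSubgroup ℂ) {c : ℂ} (hc : c ≠ 0) :
    Nat.card {u // IsMinimal (L.map (AddMonoidHom.mulLeft c)) u} =
      Nat.card {u // IsMinimal L u} :=
  Nat.card_congr ((Equiv.mulLeft₀ c hc).subtypeEquiv fun _ ↦ (isMinimal_map_mulLeft_iff hc).symm).symm

theorem abs_two_mul_re_conj_mul_le {L : AddSubgroup ℂ} {v w : ℂ} (hv : v ∈ L) (hw : w ∈ L)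
    (hmin : ∀ u ∈ L, u ≠ 0 → ‖v‖ ≤ ‖u‖) (hvw : ‖v‖ = ‖w‖)
    (hind : LinearIndependent ℝ ![v, w]) :
    |2 * (conj v * w).re| ≤ Complex.normSq v := by
  have hmin' : ∀ u ∈ L, u ≠ 0 → Complex.normSq v ≤ Complex.normSq u := fun u hu hu0 ↦ by
    rw [← Complex.sq_norm, ← Complex.sq_norm]
    exact pow_le_pow_left₀ (norm_nonneg v) (hmin u hu hu0) 2
  have hsub : v - w ≠ 0 := fun h ↦ by
    simpa using (LinearIndependent.pair_iff.1 hind 1 (-1) (by simp [← sub_eq_add_neg, h])).1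
  have hadd : v + w ≠ 0 := fun h ↦ by
    simpa using (LinearIndependent.pair_iff.1 hind 1 1 (by simp [h])).1
  have hw' : Complex.normSq w = Complex.normSq v := by
    rw [← Complex.sq_norm, ← Complex.sq_norm, hvw]
  have hre : (v * conj w).re = (conj v * w).re := by
    rw [← Complex.conj_re, map_mul, Complex.conj_conj]
  have h₁ := hmin' _ (sub_mem hv hw) hsub
  have h₂ := hmin' _ (add_mem hv hw) hadd
  rw [Complex.normSq_sub, hw', hre] at h₁
  rw [Complex.normSq_add, hw', hre] at h₂
  exact abs_le.2 ⟨by linarith, by linarith⟩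

theorem Complex.eq_mul_of_conj_mul_eq {v w u : ℂ} (hv : v ≠ 0)
    (h : conj v * w = Complex.normSq v * u) : w = v * u := by
  have hn : (Complex.normSq v : ℂ) ≠ 0 := by exact_mod_cast (Complex.normSq_pos.2 hv).ne'
  apply mul_left_cancel₀ hn
  calc (Complex.normSq v : ℂ) * w = v * (conj v * w) := by
        rw [Complex.normSq_eq_conj_mul_self]; ring
    _ = _ := by rw [h]; ring

theorem ω_eq : ω = -1 / 2 + (√3 / 2 : ℝ) * Complex.I := by
  rw [ω, show 2 * Real.pi * Complex.I / 3 = ((Real.pi - Real.pi / 3 : ℝ) : ℂ) * Complex.I by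
    push_cast; ring, Complex.exp_mul_I, ← Complex.ofReal_cos, ← Complex.ofReal_sin,
    Real.cos_pi_sub, Real.sin_pi_sub, Real.cos_pi_div_three, Real.sin_pi_div_three]
  push_cast; ring

theorem ω_re : ω.re = -1 / 2 := by
  norm_num [ω_eq]

theorem ω_im : ω.im = √3 / 2 := by
  simp [ω_eq]

theorem re_intCast_add_mul_ω (x y : ℤ) : ((x : ℂ) + y * ω).re = x - y / 2 := by
  simp only [Complex.add_re, Complex.intCast_re, Complex.mul_re, Complex.intCast_im, ω_re,
    zero_mul, sub_zero]
  ring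

theorem im_intCast_add_mul_ω (x y : ℤ) : ((x : ℂ) + y * ω).im = y * (√3 / 2) := by
  simp [ω_im]

theorem normSq_intCast_add_mul_ω (x y : ℤ) :
    Complex.normSq ((x : ℂ) + y * ω) = ((x ^ 2 - x * y + y ^ 2 : ℤ) : ℝ) := by
  rw [Complex.normSq_apply, re_intCast_add_mul_ω, im_intCast_add_mul_ω]
  push_cast
  linear_combination ((y : ℝ) ^ 2 / 4) * Real.sq_sqrt (show (0 : ℝ) ≤ 3 by norm_num)

theorem norm_intCast_add_mul_ω_eq_one_iff {x y : ℤ} :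
    ‖(x : ℂ) + y * ω‖ = 1 ↔ x ^ 2 - x * y + y ^ 2 = 1 := by
  rw [Complex.norm_def, normSq_intCast_add_mul_ω, Real.sqrt_eq_one, Int.cast_eq_one]

theorem ω_sq : ω ^ 2 = -1 - ω := by
  have h3 : ((√3 : ℝ) : ℂ) ^ 2 = 3 := by
    rw [← Complex.ofReal_pow, Real.sq_sqrt (by norm_num)]; norm_num
  rw [ω_eq]; push_cast
  linear_combination ((√3 : ℂ) ^ 2 / 4) * Complex.I_sq - h3 / 4

theorem conj_ω : conj ω = -1 - ω := by
  rw [ω_eq, map_add, map_mul, Complex.conj_ofReal, Complex.conj_I, map_div₀, map_neg, map_one,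
    map_ofNat]
  ring

theorem intCast_add_mul_ω_inj {x y x' y' : ℤ} :
    (x : ℂ) + y * ω = x' + y' * ω ↔ x = x' ∧ y = y' := by
  refine ⟨fun h ↦ ?_, fun ⟨hx, hy⟩ ↦ hx ▸ hy ▸ rfl⟩
  have him := congrArg Complex.im h
  have hre := congrArg Complex.re h
  simp only [im_intCast_add_mul_ω, re_intCast_add_mul_ω] at him hre
  have hy : y = y' := by exact_mod_cast mul_right_cancel₀ (by positivity) him
  subst hy
  exact ⟨by exact_mod_cast (sub_left_inj.1 hre), rfl⟩

namespace Eisenstein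

theorem mem_iff {z : ℂ} : z ∈ Eisenstein ↔ ∃ x y : ℤ, (x : ℂ) + y * ω = z := by
  simp [Eisenstein, AddSubgroup.mem_closure_pair, zsmul_eq_mul]

theorem one_mem : (1 : ℂ) ∈ Eisenstein := AddSubgroup.subset_closure (by simp)

theorem mul_mem {z z' : ℂ} (hz : z ∈ Eisenstein) (hz' : z' ∈ Eisenstein) :
    z * z' ∈ Eisenstein := by
  obtain ⟨x, y, rfl⟩ := mem_iff.1 hz
  obtain ⟨x', y', rfl⟩ := mem_iff.1 hz'
  refine mem_iff.2 ⟨x * x' - y * y', x * y' + y * x' - y * y', ?_⟩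
  push_cast
  linear_combination (-(y : ℂ) * y') * ω_sq

theorem conj_mem {z : ℂ} (hz : z ∈ Eisenstein) : conj z ∈ Eisenstein := by
  obtain ⟨x, y, rfl⟩ := mem_iff.1 hz
  refine mem_iff.2 ⟨x - y, -y, ?_⟩
  simp only [map_add, map_mul, map_intCast, conj_ω]
  push_cast
  ring

theorem linearIndependent_one_ω : LinearIndependent ℝ ![1, ω] :=
  (Complex.basisOneI.is_basis_iff_det.2 (by simp [Complex.basisOneI_det_pair, ω_im])).1

theorem closure_one_intCast_add_mul_ω {x y : ℤ} (hy : |y| = 1) :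
    AddSubgroup.closure {1, (x : ℂ) + y * ω} = Eisenstein := by
  refine le_antisymm ((AddSubgroup.closure_le _).2 ?_) ((AddSubgroup.closure_le _).2 ?_)
  · rintro _ (rfl | rfl)
    exacts [one_mem, mem_iff.2 ⟨x, y, rfl⟩]
  · rintro _ (rfl | rfl)
    · exact AddSubgroup.subset_closure (by simp)
    · have hy2 : (y : ℂ) ^ 2 = 1 := by exact_mod_cast (sq_abs y).symm.trans (by simp [hy])
      refine AddSubgroup.mem_closure_pair.2 ⟨-(x * y), y, ?_⟩
      simp only [zsmul_eq_mul]
      push_cast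
      linear_combination ω * hy2

theorem abs_im_conj_mul {v w : ℂ} (hind : LinearIndependent ℝ ![v, w])
    (hle : AddSubgroup.closure {v, w} ≤ Eisenstein) :
    |(conj v * w).im| = (AddSubgroup.closure {v, w}).relIndex Eisenstein * (√3 / 2) := by
  have h := AddSubgroup.relIndex_closure_pair_mul_abs_im hind linearIndependent_one_ω hle
  rw [map_one, one_mul, ω_im, abs_of_pos (by positivity)] at h
  exact h.symm

theorem one_le_norm {z : ℂ} (hz : z ∈ Eisenstein) (hz0 : z ≠ 0) : 1 ≤ ‖z‖ := by
  obtain ⟨x, y, rfl⟩ := mem_iff.1 hz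
  have hpos := Complex.normSq_pos.2 hz0
  rw [normSq_intCast_add_mul_ω, Int.cast_pos] at hpos
  rw [Complex.norm_def, Real.one_le_sqrt, normSq_intCast_add_mul_ω]
  exact_mod_cast hpos

theorem isMinimal_iff {u : ℂ} : IsMinimal Eisenstein u ↔ u ∈ Eisenstein ∧ ‖u‖ = 1 := by
  refine ⟨fun ⟨hu, hu0, hmin⟩ ↦ ⟨hu, ?_⟩, fun ⟨hu, hu1⟩ ↦ ⟨hu, ?_, fun e he he0 ↦ ?_⟩⟩
  · exact le_antisymm (by simpa using hmin 1 one_mem one_ne_zero) (one_le_norm hu hu0)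
  · rintro rfl; simp at hu1
  · exact hu1 ▸ one_le_norm he he0

theorem card_normForm_eq_one :
    Nat.card {p : ℤ × ℤ // p.1 ^ 2 - p.1 * p.2 + p.2 ^ 2 = 1} = 6 := by
  have h : {p : ℤ × ℤ | p.1 ^ 2 - p.1 * p.2 + p.2 ^ 2 = 1} =
      ((Finset.Icc (-1) 1 ×ˢ Finset.Icc (-1) 1).filter
        (fun p : ℤ × ℤ ↦ p.1 ^ 2 - p.1 * p.2 + p.2 ^ 2 = 1) : Finset (ℤ × ℤ)) := by
    ext ⟨x, y⟩
    simp only [Set.mem_ofPred_eq, Finset.coe_filter, Finset.mem_product, Finset.mem_Icc]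
    refine ⟨fun h ↦ ⟨⟨⟨?_, ?_⟩, ?_, ?_⟩, h⟩, fun h ↦ h.2⟩ <;>
      nlinarith [sq_nonneg (2 * x - y), sq_nonneg (2 * y - x)]
  rw [← Set.coe_ofPred, Nat.card_coe_set_eq, h, Set.ncard_coe_finset]
  rfl

theorem card_isMinimal : Nat.card {u : ℂ // IsMinimal Eisenstein u} = 6 := by
  rw [← card_normForm_eq_one]
  symm
  refine Nat.card_eq_of_bijective (fun p ↦ ⟨p.1.1 + p.1.2 * ω,
    isMinimal_iff.2 ⟨mem_iff.2 ⟨_, _, rfl⟩, norm_intCast_add_mul_ω_eq_one_iff.2 p.2⟩⟩) ⟨?_, ?_⟩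
  · rintro ⟨⟨x, y⟩, _⟩ ⟨⟨x', y'⟩, _⟩ h
    obtain ⟨rfl, rfl⟩ := intCast_add_mul_ω_inj.1 (congrArg Subtype.val h)
    rfl
  · rintro ⟨u, hu⟩
    obtain ⟨hmem, hnorm⟩ := isMinimal_iff.1 hu
    obtain ⟨x, y, rfl⟩ := mem_iff.1 hmem
    exact ⟨⟨(x, y), norm_intCast_add_mul_ω_eq_one_iff.1 hnorm⟩, rfl⟩

end Eisenstein

theorem Int.eq_and_abs_eq_of_four_mul_sq {ℓ : ℕ} (hℓ : ℓ.Prime) {n t : ℤ} (ht : |t| ≤ n)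
    (h : 4 * n ^ 2 = t ^ 2 + 3 * ℓ ^ 2) : n = ℓ ∧ |t| = ℓ := by
  -- `(2n - t)(2n + t) = 3ℓ²`, so `ℓ` divides a factor, whose cofactor is at most `3` as `n ≤ ℓ`.
  wlog hdvd : (ℓ : ℤ) ∣ 2 * n - t generalizing t
  · have hprime : Prime (ℓ : ℤ) := Nat.prime_iff_prime_int.1 hℓ
    have hprod : (ℓ : ℤ) ∣ (2 * n - t) * (2 * n + t) := ⟨3 * ℓ, by linear_combination h⟩
    have hdvd' := (hprime.dvd_or_dvd hprod).resolve_left hdvd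
    simpa using this (t := -t) (by simpa using ht) (by simpa using h) (by simpa using hdvd')
  obtain ⟨k, hk⟩ := hdvd
  have hℓpos : (0 : ℤ) < ℓ := by exact_mod_cast hℓ.pos
  have hk' : k * (2 * n + t) = 3 * ℓ := by
    apply mul_left_cancel₀ hℓpos.ne'
    linear_combination h - (2 * n + t) * hk
  have ⟨ht₁, ht₂⟩ := abs_le.1 ht
  have hnℓ : n ≤ ℓ := by nlinarith
  have hk1 : 1 ≤ k := by nlinarith
  have hk3 : k ≤ 3 := by nlinarith
  have hodd := hℓ.eq_two_or_odd
  rw [abs_eq hℓpos.le]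
  interval_cases k <;> omega

theorem exists_eq_map_mulLeft_Eisenstein {ℓ : ℕ} (hℓ : ℓ.Prime) {M : AddSubgroup ℂ}
    (hM : M ≤ Eisenstein) (hidx : M.relIndex Eisenstein = ℓ) (hWR : IsWellRounded M) :
    ∃ v ≠ 0, M = Eisenstein.map (AddMonoidHom.mulLeft v) := by
  obtain ⟨v, w, hv, hw, hind, rfl, hvw, hmin⟩ := hWR
  have hv0 : v ≠ 0 := by simpa using hind.ne_zero 0
  obtain ⟨p, q, hpq⟩ := Eisenstein.mem_iff.1 (hM hv)
  obtain ⟨x, y, hxy⟩ := Eisenstein.mem_iff.1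
    (Eisenstein.mul_mem (Eisenstein.conj_mem (hM hv)) (hM hw))
  set n := p ^ 2 - p * q + q ^ 2
  have hn : Complex.normSq v = n := by rw [← hpq, normSq_intCast_add_mul_ω]
  have hy : |y| = ℓ := by
    have h := Eisenstein.abs_im_conj_mul hind hM
    rw [hidx, ← hxy, im_intCast_add_mul_ω, abs_mul, abs_of_pos (by positivity : (0 : ℝ) < √3 / 2)]
      at h
    exact_mod_cast mul_right_cancel₀ (by positivity) h
  have hnorm : n ^ 2 = x ^ 2 - x * y + y ^ 2 := by
    have h := congrArg Complex.normSq hxy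
    rw [normSq_intCast_add_mul_ω, Complex.normSq_mul, Complex.normSq_conj, ← Complex.sq_norm w,
      ← hvw, Complex.sq_norm, hn] at h
    exact_mod_cast (h.trans (sq _).symm).symm
  have hre := abs_two_mul_re_conj_mul_le hv hw hmin hvw hind
  rw [← hxy, re_intCast_add_mul_ω, hn, show 2 * ((x : ℝ) - y / 2) = 2 * x - y by ring] at hre
  obtain ⟨hnℓ, ht⟩ := Int.eq_and_abs_eq_of_four_mul_sq hℓ (t := 2 * x - y) (by exact_mod_cast hre)
    (by rw [← hy, sq_abs]; linear_combination 4 * hnorm)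
  obtain ⟨a, b, hb, rfl, rfl⟩ : ∃ a b : ℤ, |b| = 1 ∧ x = ℓ * a ∧ y = ℓ * b := by
    rw [abs_eq (by positivity)] at hy ht
    rcases hy with rfl | rfl <;> rcases ht with h | h
    exacts [⟨1, 1, rfl, by linarith, by ring⟩, ⟨0, 1, rfl, by linarith, by ring⟩,
      ⟨0, -1, rfl, by linarith, by ring⟩, ⟨-1, -1, rfl, by linarith, by ring⟩]
  have hw : w = v * (a + b * ω) :=
    Complex.eq_mul_of_conj_mul_eq hv0 (by rw [← hxy, hn, hnℓ]; push_cast; ring)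
  refine ⟨v, hv0, ?_⟩
  rw [hw, ← Eisenstein.closure_one_intCast_add_mul_ω hb, ← AddSubgroup.closure_pair_mul_left,
    mul_one]

/-- Every well-rounded sublattice of `ℤ[ω]` of prime index `ℓ` is an ideal of
`ℤ[ω]`, and hence has exactly three pairs of minimal vectors (six minimal
vectors). -/
theorem wellRounded_sublattice_is_ideal (ℓ : ℕ) (hℓ : ℓ.Prime)
    (M : AddSubgroup ℂ) (hM : M ≤ Eisenstein)
    (hidx : (M.addSubgroupOf Eisenstein).index = ℓ)
    (hWR : IsWellRounded M) :
    (∀ z ∈ Eisenstein, ∀ m ∈ M, z * m ∈ M) ∧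
    Nat.card {v : ℂ // IsMinimal M v} = 6 := by
  obtain ⟨v, hv, rfl⟩ := exists_eq_map_mulLeft_Eisenstein hℓ hM hidx hWR
  refine ⟨?_, by rw [card_isMinimal_map_mulLeft _ hv, Eisenstein.card_isMinimal]⟩
  rintro z hz _ ⟨e, he, rfl⟩
  exact ⟨z * e, Eisenstein.mul_mem hz he, by simp [mul_left_comm]⟩
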